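/- arXiv:0706.3006 — 3 statements merged into one kernel-verified Lean document; each statement's English description precedes it below -/
import Mathlib

section
/- In a recollement of abelian categories where A has enough projectives, if L is an object of A with i^*L = 0 and i^!L = 0, then the kernel of σ_L : j_! j^* L → L is isomorphic to i_*((L_1 i^*) L), where L_1 i^* is the first left derived functor of i^*. -/
open CategoryTheory CategoryTheory.Limits

universe v u₁ u₂ u₃

/-- A recollement of abelian categories: six additive functors
`i^* ⊣ i_* ⊣ i^!` and `j_! ⊣ j^* ⊣ j_*` satisfying the axioms (R1)-(R3)
(and the exact sequences of natural transformations (R5)). -/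
structure Recollement (A₁ : Type u₁) (A : Type u₂) (A₂ : Type u₃)
    [Category.{v} A₁] [Category.{v} A] [Category.{v} A₂]
    [Abelian A₁] [Abelian A] [Abelian A₂] where
  /-- the functor `i^* : A ⥤ A'` -/
  iStar : A ⥤ A₁
  /-- the functor `i_* : A' ⥤ A` -/
  iLow : A₁ ⥤ A
  /-- the functor `i^! : A ⥤ A'` -/
  iShriek : A ⥤ A₁
  /-- the functor `j_! : A'' ⥤ A` -/
  jShriek : A₂ ⥤ A
  /-- the functor `j^* : A ⥤ A''` -/
  jStar : A ⥤ A₂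
  /-- the functor `j_* : A'' ⥤ A` -/
  jLow : A₂ ⥤ A
  iStar_additive : iStar.Additive
  iLow_additive : iLow.Additive
  iShriek_additive : iShriek.Additive
  jShriek_additive : jShriek.Additive
  jStar_additive : jStar.Additive
  jLow_additive : jLow.Additive
  /-- `i^* ⊣ i_*` -/
  adj₁ : iStar ⊣ iLow
  /-- `i_* ⊣ i^!` -/
  adj₂ : iLow ⊣ iShriek
  /-- `j_! ⊣ j^*` -/
  adj₃ : jShriek ⊣ jStar
  /-- `j^* ⊣ j_*` -/
  adj₄ : jStar ⊣ jLow
  /-- the adjunction morphism `i^* i_* → Id` is an isomorphism -/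
  counit₁_iso : IsIso adj₁.counit
  /-- the adjunction morphism `Id → i^! i_*` is an isomorphism -/
  unit₂_iso : IsIso adj₂.unit
  /-- the adjunction morphism `Id → j^* j_!` is an isomorphism -/
  unit₃_iso : IsIso adj₃.unit
  /-- the adjunction morphism `j^* j_* → Id` is an isomorphism -/
  counit₄_iso : IsIso adj₄.counit
  iLow_faithful : iLow.Faithful
  iLow_full : iLow.Full
  /-- `j^* i_* = 0` -/
  jStar_iLow_zero : ∀ X : A₁, IsZero (jStar.obj (iLow.obj X))
  /-- `i_*` embeds `A'` onto the full subcategory of objects annihilated by `j^*` -/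
  essImage : ∀ L : A, IsZero (jStar.obj L) → ∃ X : A₁, Nonempty (iLow.obj X ≅ L)
  comp₁ : ∀ L : A, adj₃.counit.app L ≫ adj₁.unit.app L = 0
  /-- exactness of `j_! j^* → Id → i_* i^*` -/
  exact₁ : ∀ L : A, (ShortComplex.mk (adj₃.counit.app L) (adj₁.unit.app L) (comp₁ L)).Exact
  /-- `Id → i_* i^*` is an epimorphism -/
  epi₁ : ∀ L : A, Epi (adj₁.unit.app L)
  comp₂ : ∀ L : A, adj₂.counit.app L ≫ adj₄.unit.app L = 0
  /-- exactness of `i_* i^! → Id → j_* j^*` -/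
  exact₂ : ∀ L : A, (ShortComplex.mk (adj₂.counit.app L) (adj₄.unit.app L) (comp₂ L)).Exact
  /-- `i_* i^! → Id` is a monomorphism -/
  mono₂ : ∀ L : A, Mono (adj₂.counit.app L)

variable {A₁ : Type u₁} {A : Type u₂} {A₂ : Type u₃}
  [Category.{v} A₁] [Category.{v} A] [Category.{v} A₂]
  [Abelian A₁] [Abelian A] [Abelian A₂]


/-!
Since `i^* L = 0`, the counit `σ_L : j_! j^* L → L` is an epimorphism, so the augmentation
`π : P₀ → L` of a projective resolution lifts to `φ : P₀ → j_! j^* L`, which is again an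
epimorphism. Then `ker σ_L ≅ coker (ker φ → ker π)`, and `ker σ_L ≅ i_* i^* (ker σ_L)` because
`j^*` kills it. The right exact functor `i^*` kills `j_!`, and it turns `ker φ → P₀` into an
isomorphism (a snake-lemma chase through the counit). Hence
`i^* (ker σ_L) ≅ coker (i^* ker φ → i^* ker π) ≅ ker (i^* ker π → i^* P₀) = (L₁ i^*) L`.
-/

open CategoryTheory.Category

namespace CategoryTheory

variable {C : Type*} [Category* C] [Abelian C]

noncomputable def cokernelIsoKernelOfIsIsoComp {X Y Z : C} (f : X ⟶ Y) (g : Y ⟶ Z)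
    [IsIso (f ≫ g)] : cokernel f ≅ kernel g := by
  have hS := kernelCokernelCompSequence_exact f g
  have : Mono (kernelCokernelCompSequence.δ f g) :=
    (hS.exact 1).mono_g ((isZero_kernel_of_mono (f ≫ g)).eq_of_src _ _)
  have : Epi (kernelCokernelCompSequence.δ f g) :=
    (hS.exact 2).epi_f ((isZero_cokernel_of_epi (f ≫ g)).eq_of_tgt _ _)
  have := isIso_of_mono_of_epi (kernelCokernelCompSequence.δ f g)
  exact (asIso (kernelCokernelCompSequence.δ f g)).symm

noncomputable def kernelIsoCokernelKernelMapOfEpi {X Y Z : C} (f : X ⟶ Y) (g : Y ⟶ Z) [Epi f] :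
    kernel g ≅ cokernel (kernel.map f (f ≫ g) (𝟙 X) g (by simp)) := by
  have hS := kernelCokernelCompSequence_exact f g
  have hS₀ : (ShortComplex.mk (kernel.map f (f ≫ g) (𝟙 X) g (by simp))
      (kernel.map (f ≫ g) g f (𝟙 Z) (by simp)) (by ext; simp)).Exact := hS.exact 0
  have : Epi (kernel.map (f ≫ g) g f (𝟙 Z) (by simp)) :=
    (hS.exact 1).epi_f ((isZero_cokernel_of_epi f).eq_of_tgt _ _)
  exact hS₀.gIsCokernel.coconePointUniqueUpToIso (colimit.isColimit _)

noncomputable def ShortComplex.homologyIsoKernelOfIsColimit (S : ShortComplex C) {Q : C}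
    {p : S.X₂ ⟶ Q} (wp : S.f ≫ p = 0) (hp : IsColimit (CokernelCofork.ofπ p wp))
    (m : Q ⟶ S.X₃) (hm : p ≫ m = S.g) : S.homology ≅ kernel m := by
  obtain rfl : hp.desc (CokernelCofork.ofπ S.g S.zero) = m :=
    Cofork.IsColimit.hom_ext hp ((Cofork.IsColimit.π_desc hp).trans hm.symm)
  exact RightHomologyData.homologyIso
    { Q := Q
      H := kernel _
      p := p
      ι := kernel.ι _
      wp := wp
      hp := hp
      wι := kernel.condition _
      hι := kernelIsKernel _ }

namespace ProjectiveResolution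

variable {D : Type*} [Category* D] [Abelian D] {X : C}

lemma d_comp_kernelLift (Q : ProjectiveResolution X) :
    Q.complex.d 2 1 ≫ kernel.lift (Q.π.f 0) (Q.complex.d 1 0) Q.complex_d_comp_π_f_zero = 0 := by
  rw [← cancel_mono (kernel.ι _), assoc, kernel.lift_ι, zero_comp]
  exact Q.complex.d_comp_d 2 1 0

noncomputable def isColimitKernelLift (Q : ProjectiveResolution X) :
    IsColimit (CokernelCofork.ofπ _ Q.d_comp_kernelLift) :=
  have : Epi (kernel.lift (Q.π.f 0) (Q.complex.d 1 0) Q.complex_d_comp_π_f_zero) :=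
    Q.exact₀.epi_kernelLift
  ((ShortComplex.exact_iff_of_epi_of_isIso_of_mono
    (S₁ := ShortComplex.mk _ _ Q.d_comp_kernelLift)
    (S₂ := ShortComplex.mk _ _ (Q.complex.d_comp_d 2 1 0))
    ⟨𝟙 _, 𝟙 _, kernel.ι _, by simp, by rw [id_comp, kernel.lift_ι]⟩).2
      (Q.exact_succ 0)).gIsCokernel

noncomputable def leftDerivedOneIsoKernel [HasProjectiveResolutions C]
    (Q : ProjectiveResolution X) (F : C ⥤ D) [F.Additive] [PreservesFiniteColimits F] :
    (F.leftDerived 1).obj X ≅ kernel (F.map (kernel.ι (Q.π.f 0))) := by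
  let p := kernel.lift (Q.π.f 0) (Q.complex.d 1 0) Q.complex_d_comp_π_f_zero
  have wp : F.map (Q.complex.d 2 1) ≫ F.map p = 0 := by
    rw [← F.map_comp, Q.d_comp_kernelLift, F.map_zero]
  have hp : IsColimit (CokernelCofork.ofπ (F.map p) wp) :=
    CokernelCofork.mapIsColimit _ Q.isColimitKernelLift F
  exact Q.isoLeftDerivedObj F 1 ≪≫
    HomologicalComplex.homologyIsoSc' _ 2 1 0 (by simp) (by simp) ≪≫
    ShortComplex.homologyIsoKernelOfIsColimit _ wp hp _
      (by show F.map p ≫ _ = F.map (Q.complex.d 1 0); rw [← F.map_comp, kernel.lift_ι])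

end ProjectiveResolution

end CategoryTheory

namespace Recollement

variable (R : Recollement A₁ A A₂)

instance : R.iStar.Additive := R.iStar_additive
instance : R.iLow.Additive := R.iLow_additive
instance : R.jStar.Additive := R.jStar_additive
instance : R.iLow.Faithful := R.iLow_faithful
instance : IsIso R.adj₃.unit := R.unit₃_iso

instance : PreservesColimits R.iStar := R.adj₁.leftAdjoint_preservesColimits
instance : PreservesColimits R.jShriek := R.adj₃.leftAdjoint_preservesColimits
instance : PreservesColimits R.jStar := R.adj₄.leftAdjoint_preservesColimits
instance : PreservesLimits R.jStar := R.adj₃.rightAdjoint_preservesLimits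

lemma eq_zero_of_isZero_jStar {N : A₂} {Y : A} (f : R.jShriek.obj N ⟶ Y)
    (hY : IsZero (R.jStar.obj Y)) : f = 0 :=
  R.adj₃.homEquiv _ _ |>.injective (hY.eq_of_tgt _ _)

lemma isZero_iStar_obj_jShriek_obj (N : A₂) : IsZero (R.iStar.obj (R.jShriek.obj N)) := by
  rw [IsZero.iff_id_eq_zero]
  exact R.adj₁.homEquiv _ _ |>.injective <|
    (R.eq_zero_of_isZero_jStar _ (R.jStar_iLow_zero _)).trans
      (R.eq_zero_of_isZero_jStar _ (R.jStar_iLow_zero _)).symm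

instance isIso_counit_app_jShriek_obj (N : A₂) :
    IsIso (R.adj₃.counit.app (R.jShriek.obj N)) :=
  have : IsIso (R.jShriek.map (R.adj₃.unit.app N) ≫ R.adj₃.counit.app (R.jShriek.obj N)) := by
    rw [R.adj₃.left_triangle_components N]; exact IsIso.id _
  IsIso.of_isIso_comp_left (R.jShriek.map (R.adj₃.unit.app N)) _

instance isIso_jStar_map_counit_app (M : A) : IsIso (R.jStar.map (R.adj₃.counit.app M)) :=
  have : IsIso (R.adj₃.unit.app (R.jStar.obj M) ≫ R.jStar.map (R.adj₃.counit.app M)) := by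
    rw [R.adj₃.right_triangle_components M]; exact IsIso.id _
  IsIso.of_isIso_comp_left (R.adj₃.unit.app (R.jStar.obj M)) _

lemma epi_counit_app_of_isZero_iStar {L : A} (hL : IsZero (R.iStar.obj L)) :
    Epi (R.adj₃.counit.app L) :=
  (R.exact₁ L).epi_f ((R.iLow.map_isZero hL).eq_of_tgt _ _)

lemma isIso_unit_app_of_isZero_jStar {M : A} (hM : IsZero (R.jStar.obj M)) :
    IsIso (R.adj₁.unit.app M) :=
  have := (R.exact₁ M).mono_g ((R.jShriek.map_isZero hM).eq_of_src _ _)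
  have := R.epi₁ M
  isIso_of_mono_of_epi _

lemma isZero_jStar_obj_kernel_counit_app (M : A) :
    IsZero (R.jStar.obj (kernel (R.adj₃.counit.app M))) :=
  (isZero_kernel_of_mono (R.jStar.map (R.adj₃.counit.app M))).of_iso
    (PreservesKernel.iso R.jStar _)

lemma epi_of_epi_jStar_map {P : A} {N : A₂} (φ : P ⟶ R.jShriek.obj N) [Epi (R.jStar.map φ)] :
    Epi φ :=
  Abelian.epi_of_cokernel_π_eq_zero _ <| R.eq_zero_of_isZero_jStar _ <|
    (isZero_cokernel_of_epi (R.jStar.map φ)).of_iso (PreservesCokernel.iso R.jStar φ)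

lemma epi_of_epi_comp_counit_app {P L : A} (φ : P ⟶ R.jShriek.obj (R.jStar.obj L))
    [Epi (φ ≫ R.adj₃.counit.app L)] : Epi φ := by
  have : Epi (R.jStar.map φ ≫ R.jStar.map (R.adj₃.counit.app L)) := by
    rw [← R.jStar.map_comp]; infer_instance
  have := (epi_comp_iff_of_isIso _ _).1 this
  exact R.epi_of_epi_jStar_map φ

section

open CategoryTheory.Abelian CategoryTheory.Abelian.Pseudoelement
open scoped Pseudoelement

variable {R} {P : A} {N : A₂} (φ : P ⟶ R.jShriek.obj N) [Epi φ]

lemma epi_iStar_map_kernel_ι : Epi (R.iStar.map (kernel.ι φ)) :=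
  ((ShortComplex.kernelSequence_exact φ).map_of_epi_of_preservesCokernel R.iStar ‹_›
    inferInstance).epi_f ((R.isZero_iStar_obj_jShriek_obj N).eq_of_tgt _ _)

/- The snake lemma for the counit `σ` on `0 → ker φ → P → j_! N → 0`: the kernel of
`coker σ_{ker φ} → coker σ_P` is a quotient of `ker σ_{j_! N} = 0`, and `coker σ = i_* i^*`. -/
lemma mono_iStar_map_kernel_ι : Mono (R.iStar.map (kernel.ι φ)) := by
  have hS : (ShortComplex.mk (R.jShriek.map (R.jStar.map (kernel.ι φ)))
      (R.jShriek.map (R.jStar.map φ)) (by simp [← Functor.map_comp])).Exact :=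
    (ShortComplex.kernelSequence_exact φ).map_of_epi_of_preservesCokernel (R.jStar ⋙ R.jShriek)
      ‹_› inferInstance
  have hη : kernel.ι φ ≫ R.adj₁.unit.app P =
      R.adj₁.unit.app (kernel φ) ≫ R.iLow.map (R.iStar.map (kernel.ι φ)) :=
    (R.adj₁.unit_naturality _).symm
  have hεφ : R.jShriek.map (R.jStar.map φ) ≫ R.adj₃.counit.app (R.jShriek.obj N) =
      R.adj₃.counit.app P ≫ φ := R.adj₃.counit_naturality φ
  have hει : R.jShriek.map (R.jStar.map (kernel.ι φ)) ≫ R.adj₃.counit.app P =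
      R.adj₃.counit.app (kernel φ) ≫ kernel.ι φ := R.adj₃.counit_naturality _
  have := R.epi₁ (kernel φ)
  apply R.iLow.mono_of_mono_map
  apply mono_of_zero_of_map_zero
  intro x hx
  obtain ⟨w, rfl⟩ := pseudo_surjective_of_epi (R.adj₁.unit.app _) x
  obtain ⟨t, ht⟩ := pseudo_exact_of_exact (R.exact₁ P) (kernel.ι φ w) <| by
    rw [← Pseudoelement.comp_apply, hη, Pseudoelement.comp_apply]
    exact hx
  have hφt : R.jShriek.map (R.jStar.map φ) t = 0 := by
    apply zero_of_map_zero _ (pseudo_injective_of_mono (R.adj₃.counit.app (R.jShriek.obj N)))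
    rw [← Pseudoelement.comp_apply, hεφ, Pseudoelement.comp_apply, ht,
      ← Pseudoelement.comp_apply, kernel.condition, Pseudoelement.zero_apply]
  obtain ⟨u, hu⟩ := pseudo_exact_of_exact hS t hφt
  have hσu : R.adj₃.counit.app (kernel φ) u = w := by
    apply pseudo_injective_of_mono (kernel.ι φ)
    rw [← Pseudoelement.comp_apply, ← hει, Pseudoelement.comp_apply, hu, ht]
  rw [← hσu, ← Pseudoelement.comp_apply, R.comp₁, Pseudoelement.zero_apply]

end

noncomputable def iStarKernelCounitIso {P L : A} (π : P ⟶ L) [hπ : Epi π]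
    (φ : P ⟶ R.jShriek.obj (R.jStar.obj L)) (hφ : φ ≫ R.adj₃.counit.app L = π) :
    R.iStar.obj (kernel (R.adj₃.counit.app L)) ≅ kernel (R.iStar.map (kernel.ι π)) := by
  subst hφ
  have := R.epi_of_epi_comp_counit_app φ
  have := epi_iStar_map_kernel_ι φ
  have := mono_iStar_map_kernel_ι φ
  have : IsIso (R.iStar.map (kernel.map φ _ (𝟙 P) (R.adj₃.counit.app L) (by simp)) ≫
      R.iStar.map (kernel.ι (φ ≫ R.adj₃.counit.app L))) := by
    rw [← R.iStar.map_comp, kernel.lift_ι, comp_id]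
    exact isIso_of_mono_of_epi _
  exact R.iStar.mapIso (kernelIsoCokernelKernelMapOfEpi _ _) ≪≫
    PreservesCokernel.iso R.iStar _ ≪≫ cokernelIsoKernelOfIsIsoComp _ _

end Recollement

theorem stmt4_general [EnoughProjectives A] (R : Recollement A₁ A A₂) (L : A)
    (h1 : IsZero (R.iStar.obj L)) :
    letI := R.iStar_additive
    Nonempty (kernel (R.adj₃.counit.app L) ≅
      R.iLow.obj ((R.iStar.leftDerived 1).obj L)) := by
  have := R.epi_counit_app_of_isZero_iStar h1
  have := R.isIso_unit_app_of_isZero_jStar (R.isZero_jStar_obj_kernel_counit_app L)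
  let Q := ProjectiveResolution.of L
  -- `Q.π.f 0` lands in `((ChainComplex.single₀ A).obj L).X 0`, only definitionally equal to `L`.
  exact ⟨asIso (R.adj₁.unit.app (kernel (R.adj₃.counit.app L))) ≪≫ R.iLow.mapIso
    (R.iStarKernelCounitIso (L := L) (Q.π.f 0) (hπ := inferInstanceAs (Epi (Q.π.f 0))) _
      (Projective.factorThru_comp _ _) ≪≫ (Q.leftDerivedOneIsoKernel R.iStar).symm)⟩

theorem stmt4 [EnoughProjectives A] (R : Recollement A₁ A A₂) (L : A)
    (h1 : IsZero (R.iStar.obj L)) (h2 : IsZero (R.iShriek.obj L)) :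
    letI := R.iStar_additive
    Nonempty (kernel (R.adj₃.counit.app L) ≅
      R.iLow.obj ((R.iStar.leftDerived 1).obj L)) :=
  stmt4_general R L h1
end

section
/- In a recollement of abelian categories, j^* and j_{!*} induce mutually inverse bijections between the set of isomorphism classes of simple objects L of A with j^*L ≠ 0 and the set of isomorphism classes of nonzero simple objects of A''. -/
open CategoryTheory CategoryTheory.Limits

universe v u₁ u₂ u₃

variable {A₁ : Type u₁} {A : Type u₂} {A₂ : Type u₃}
  [Category.{v} A₁] [Category.{v} A] [Category.{v} A₂]
  [Abelian A₁] [Abelian A] [Abelian A₂]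


/-- The canonical map `N_X : j_! X ⟶ j_* X` corresponding to the identity of `X`
under `Hom_A(j_! X, j_* X) ≅ Hom_{A''}(X, j^* j_* X) ≅ Hom_{A''}(X, X)`. -/
noncomputable def Recollement.N (R : Recollement A₁ A A₂) (X : A₂) :
    R.jShriek.obj X ⟶ R.jLow.obj X :=
  haveI := R.counit₄_iso
  (R.adj₃.homEquiv X (R.jLow.obj X)).symm (inv (R.adj₄.counit.app X))

/-- The intermediate extension functor `j_{!*}`, on objects: the image of `N_X`. -/
noncomputable def Recollement.jMid (R : Recollement A₁ A A₂) (X : A₂) : A :=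
  Limits.image (R.N X)

/-!
`j^*` is exact and inverts `N_X`, so `j^* j_{!*} X ≅ X`. By adjunction, an object killed by `j^*`
admits no nonzero map to `j_* X` and receives none from `j_! X`; as `j_! X ↠ j_{!*} X ↪ j_* X`,
`j_{!*} X` has no nonzero subobject or quotient killed by `j^*`, which makes it simple when `X`
is. Conversely, for a simple `L` with `j^* L ≠ 0` the counit `j_! j^* L → L` is a nonzero map
to a simple object, hence epi, and the unit `L → j_* j^* L` is mono; their composite is
`N_{j^* L}`, so `L` is its image `j_{!*} j^* L`.
-/

namespace CategoryTheory

variable {C : Type*} {D : Type*} [Category C] [Category D]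

namespace Adjunction

section

variable [HasZeroMorphisms C] [HasZeroMorphisms D] {F : C ⥤ D} {G : D ⥤ C}

lemma eq_zero_of_isZero_leftAdjoint_obj (adj : F ⊣ G) [G.PreservesZeroMorphisms] {M : C} {Y : D}
    (f : M ⟶ G.obj Y) (hM : IsZero (F.obj M)) : f = 0 :=
  calc f = adj.homEquiv M Y ((adj.homEquiv M Y).symm f) := by rw [Equiv.apply_symm_apply]
    _ = adj.homEquiv M Y 0 := by rw [hM.eq_of_src ((adj.homEquiv M Y).symm f) 0]
    _ = 0 := by rw [homEquiv_unit, G.map_zero, comp_zero]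

lemma eq_zero_of_isZero_rightAdjoint_obj (adj : F ⊣ G) [F.PreservesZeroMorphisms] {X : C} {M : D}
    (f : F.obj X ⟶ M) (hM : IsZero (G.obj M)) : f = 0 :=
  calc f = (adj.homEquiv X M).symm (adj.homEquiv X M f) := by rw [Equiv.symm_apply_apply]
    _ = (adj.homEquiv X M).symm 0 := by rw [hM.eq_of_tgt (adj.homEquiv X M f) 0]
    _ = 0 := by rw [homEquiv_counit, F.map_zero, zero_comp]

lemma counit_app_ne_zero (adj : F ⊣ G) [G.PreservesZeroMorphisms] {L : D}
    (hL : ¬ IsZero (G.obj L)) : adj.counit.app L ≠ 0 := fun h ↦ hL <| by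
  rw [IsZero.iff_id_eq_zero, ← adj.right_triangle_components L, h, G.map_zero, comp_zero]

lemma unit_app_ne_zero (adj : F ⊣ G) [F.PreservesZeroMorphisms] {L : C}
    (hL : ¬ IsZero (F.obj L)) : adj.unit.app L ≠ 0 := fun h ↦ hL <| by
  rw [IsZero.iff_id_eq_zero, ← adj.left_triangle_components L, h, F.map_zero, zero_comp]

end

lemma simple_rightAdjoint_obj [Abelian C] [Abelian D] {F : C ⥤ D} {G : D ⥤ C}
    (adj : F ⊣ G) [IsIso adj.unit] [G.PreservesZeroMorphisms] [G.PreservesEpimorphisms]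
    {L : D} [Simple L] (hL : ¬ IsZero (G.obj L)) : Simple (G.obj L) where
  mono_isIso_iff_nonzero {V} f _ := by
    refine ⟨fun _ h ↦ hL (IsZero.of_epi_eq_zero f h), fun hf ↦ ?_⟩
    set g := (adj.homEquiv V L).symm f
    have hfg : adj.unit.app V ≫ G.map g = f :=
      (adj.homEquiv_unit V L g).symm.trans ((adj.homEquiv V L).apply_symm_apply f)
    have : Epi g := epi_of_nonzero_to_simple fun h ↦ hf (by rw [← hfg, h, G.map_zero, comp_zero])
    have : Epi f := hfg ▸ epi_comp _ _
    exact isIso_of_mono_of_epi f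

end Adjunction

lemma Functor.simple_of_simple_obj_of_hom_eq_zero [Abelian C] [HasZeroMorphisms D] (F : C ⥤ D)
    [F.PreservesZeroMorphisms] [F.PreservesMonomorphisms] [F.PreservesEpimorphisms]
    {M : C} [Simple (F.obj M)]
    (hsub : ∀ {Y : C} (f : Y ⟶ M), IsZero (F.obj Y) → f = 0)
    (hquot : ∀ {Z : C} (g : M ⟶ Z), IsZero (F.obj Z) → g = 0) : Simple M where
  mono_isIso_iff_nonzero {Y} f _ := by
    refine ⟨fun _ h ↦ Simple.not_isZero (F.obj M) (F.map_isZero (IsZero.of_epi_eq_zero f h)),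
      fun hf ↦ ?_⟩
    have hFf : F.map f ≠ 0 := fun h ↦ hf (hsub f (IsZero.of_mono_eq_zero _ h))
    have := isIso_of_mono_of_nonzero hFf
    have hπ : cokernel.π f = 0 := hquot _ <| IsZero.of_epi_eq_zero (F.map (cokernel.π f)) <| by
      rw [← cancel_epi (F.map f), ← F.map_comp, cokernel.condition, F.map_zero, comp_zero]
    have := Preadditive.epi_of_cokernel_zero hπ
    exact isIso_of_mono_of_epi f

end CategoryTheory

namespace Recollement

variable (R : Recollement A₁ A A₂)

attribute [local instance] jShriek_additive jStar_additive jLow_additive unit₃_iso counit₄_iso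

instance : R.jStar.PreservesMonomorphisms := R.jStar.preservesMonomorphisms_of_adjunction R.adj₃

instance : R.jStar.PreservesEpimorphisms := R.jStar.preservesEpimorphisms_of_adjunction R.adj₄

lemma unit_comp_jStar_map_N (X : A₂) :
    R.adj₃.unit.app X ≫ R.jStar.map (R.N X) = inv (R.adj₄.counit.app X) :=
  (R.adj₃.homEquiv_unit _ _ _).symm.trans ((R.adj₃.homEquiv _ _).apply_symm_apply _)

instance isIso_jStar_map_N (X : A₂) : IsIso (R.jStar.map (R.N X)) := by
  have : IsIso (R.adj₃.unit.app X ≫ R.jStar.map (R.N X)) := by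
    rw [R.unit_comp_jStar_map_N]; infer_instance
  exact IsIso.of_isIso_comp_left (R.adj₃.unit.app X) _

instance isIso_jStar_map_image_ι (X : A₂) : IsIso (R.jStar.map (image.ι (R.N X))) := by
  have : Epi (R.jStar.map (factorThruImage (R.N X)) ≫ R.jStar.map (image.ι (R.N X))) := by
    rw [← R.jStar.map_comp, image.fac]; infer_instance
  have : Epi (R.jStar.map (image.ι (R.N X))) := epi_of_epi (R.jStar.map (factorThruImage _)) _
  exact isIso_of_mono_of_epi _

-- Without the ascription, unifying with `R.jMid X` first hides the instance found above.
noncomputable def jStarJMidIso (X : A₂) : R.jStar.obj (R.jMid X) ≅ X :=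
  (asIso (R.jStar.map (image.ι (R.N X))) :) ≪≫ asIso (R.adj₄.counit.app X)

lemma simple_jMid (X : A₂) [Simple X] : Simple (R.jMid X) :=
  have : Simple (R.jStar.obj (image (R.N X))) := Simple.of_iso (R.jStarJMidIso X)
  R.jStar.simple_of_simple_obj_of_hom_eq_zero (M := image (R.N X))
    (fun _ hY ↦ zero_of_comp_mono (image.ι (R.N X))
      (R.adj₄.eq_zero_of_isZero_leftAdjoint_obj _ hY))
    (fun _ hZ ↦ zero_of_epi_comp (factorThruImage (R.N X))
      (R.adj₃.eq_zero_of_isZero_rightAdjoint_obj _ hZ))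

lemma simple_jStar_obj (L : A) [Simple L] (hL : ¬ IsZero (R.jStar.obj L)) :
    Simple (R.jStar.obj L) :=
  R.adj₃.simple_rightAdjoint_obj hL

lemma N_jStar_obj (L : A) :
    R.N (R.jStar.obj L) = R.adj₃.counit.app L ≫ R.adj₄.unit.app L := by
  apply (R.adj₃.homEquiv _ _).injective
  rw [Adjunction.homEquiv_unit, Adjunction.homEquiv_unit, R.unit_comp_jStar_map_N,
    Functor.map_comp, ← Category.assoc, R.adj₃.right_triangle_components L, Category.id_comp]
  exact (IsIso.eq_inv_of_inv_hom_id (R.adj₄.left_triangle_components L)).symm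

noncomputable def jMidJStarIso (L : A) [Simple L] (hL : ¬ IsZero (R.jStar.obj L)) :
    R.jMid (R.jStar.obj L) ≅ L :=
  have : Epi (R.adj₃.counit.app L) :=
    epi_of_nonzero_to_simple (Y := L) (R.adj₃.counit_app_ne_zero hL)
  have : Mono (R.adj₄.unit.app L) :=
    mono_of_nonzero_from_simple (X := L) (R.adj₄.unit_app_ne_zero hL)
  have : StrongEpi (R.adj₃.counit.app L) := strongEpi_of_epi _
  (image.isoStrongEpiMono _ _ (R.N_jStar_obj L).symm).symm

end Recollement

/-- `j^*` and `j_{!*}` induce mutually inverse bijections between iso-classes of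
simple objects `L` of `A` with `j^* L ≠ 0` and iso-classes of (nonzero) simple
objects of `A''`. -/
theorem stmt7 (R : Recollement A₁ A A₂) :
    (∀ L : A, Simple L → ¬ IsZero (R.jStar.obj L) →
      Simple (R.jStar.obj L) ∧ Nonempty (R.jMid (R.jStar.obj L) ≅ L)) ∧
    (∀ X : A₂, Simple X →
      Simple (R.jMid X) ∧ ¬ IsZero (R.jStar.obj (R.jMid X)) ∧
        Nonempty (R.jStar.obj (R.jMid X) ≅ X)) :=
  ⟨fun L _ hL ↦ ⟨R.simple_jStar_obj L hL, ⟨R.jMidJStarIso L hL⟩⟩,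
    fun X _ ↦ ⟨R.simple_jMid X,
      fun h ↦ Simple.not_isZero X (h.of_iso (R.jStarJMidIso X).symm), ⟨R.jStarJMidIso X⟩⟩⟩
end

section
/- Let Π = Π_λ(Q_∞) with λ = (−n, 1), n ≠ 0. The algebra map π : C⟨x,y⟩ → e_0 Π e_0 sending 1 ↦ e_0, x ↦ X, y ↦ Y is surjective, and its kernel contains the element ([x,y] − 1)([x,y] + n − 1). -/
open scoped ComplexOrder

/-- Generators of the deformed preprojective algebra `Π_λ(Q_∞)` of the quiver with two
vertices `{∞, 0}`, arrows `v : 0 → ∞`, `X : 0 → 0` and their reverses `w = v*`, `Y = X*`. -/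
inductive PiGen : Type
  | X | Y | v | w | e0 | einf
  deriving DecidableEq

/-- Generators as elements of the free algebra. -/
noncomputable def pg (a : PiGen) : FreeAlgebra ℂ PiGen := FreeAlgebra.ι ℂ a

/-- The defining relations of `Π_λ`, `λ = (λ_∞, λ_0)`: the path algebra relations for the
double quiver (orthogonal idempotents `e_0, e_∞` summing to `1`, `X = e_0 X e_0`,
`Y = e_0 Y e_0`, `v = e_∞ v e_0`, `w = e_0 w e_∞`) together with
`[X,Y] - wv = λ_0 e_0` and `vw = λ_∞ e_∞`. -/
inductive PiRel (lam0 laminf : ℂ) : FreeAlgebra ℂ PiGen → FreeAlgebra ℂ PiGen → Prop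
  | idem_e0 : PiRel lam0 laminf (pg .e0 * pg .e0) (pg .e0)
  | idem_einf : PiRel lam0 laminf (pg .einf * pg .einf) (pg .einf)
  | orth₁ : PiRel lam0 laminf (pg .e0 * pg .einf) 0
  | orth₂ : PiRel lam0 laminf (pg .einf * pg .e0) 0
  | sum_one : PiRel lam0 laminf (pg .e0 + pg .einf) 1
  | X_path : PiRel lam0 laminf (pg .e0 * pg .X * pg .e0) (pg .X)
  | Y_path : PiRel lam0 laminf (pg .e0 * pg .Y * pg .e0) (pg .Y)
  | v_path : PiRel lam0 laminf (pg .einf * pg .v * pg .e0) (pg .v)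
  | w_path : PiRel lam0 laminf (pg .e0 * pg .w * pg .einf) (pg .w)
  | main : PiRel lam0 laminf (pg .X * pg .Y - pg .Y * pg .X - pg .w * pg .v) (lam0 • pg .e0)
  | vw : PiRel lam0 laminf (pg .v * pg .w) (laminf • pg .einf)

/-- The deformed preprojective algebra `Π_λ(Q_∞)` with weight `λ = (λ_∞, λ_0)`. -/
noncomputable abbrev PiAlg (lam0 laminf : ℂ) := RingQuot (PiRel lam0 laminf)

noncomputable def PX (lam0 laminf : ℂ) : PiAlg lam0 laminf :=
  RingQuot.mkAlgHom ℂ (PiRel lam0 laminf) (pg .X)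
noncomputable def PY (lam0 laminf : ℂ) : PiAlg lam0 laminf :=
  RingQuot.mkAlgHom ℂ (PiRel lam0 laminf) (pg .Y)
noncomputable def Pv (lam0 laminf : ℂ) : PiAlg lam0 laminf :=
  RingQuot.mkAlgHom ℂ (PiRel lam0 laminf) (pg .v)
noncomputable def Pw (lam0 laminf : ℂ) : PiAlg lam0 laminf :=
  RingQuot.mkAlgHom ℂ (PiRel lam0 laminf) (pg .w)
noncomputable def Pe0 (lam0 laminf : ℂ) : PiAlg lam0 laminf :=
  RingQuot.mkAlgHom ℂ (PiRel lam0 laminf) (pg .e0)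
noncomputable def Peinf (lam0 laminf : ℂ) : PiAlg lam0 laminf :=
  RingQuot.mkAlgHom ℂ (PiRel lam0 laminf) (pg .einf)

/-- Generators `x, y` of the free algebra `ℂ⟨x,y⟩`. -/
inductive WGen : Type
  | x | y
  deriving DecidableEq

noncomputable def wx : FreeAlgebra ℂ WGen := FreeAlgebra.ι ℂ WGen.x
noncomputable def wy : FreeAlgebra ℂ WGen := FreeAlgebra.ι ℂ WGen.y

/-- The evaluation `ℂ⟨x,y⟩ → Π`, `x ↦ X`, `y ↦ Y`. -/
noncomputable def wLift (n : ℂ) : FreeAlgebra ℂ WGen →ₐ[ℂ] PiAlg 1 (-n) :=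
  FreeAlgebra.lift ℂ (fun g => match g with
    | WGen.x => PX 1 (-n)
    | WGen.y => PY 1 (-n))

/-- The algebra map `π : ℂ⟨x,y⟩ → e_0 Π e_0`, `1 ↦ e_0`, `x ↦ X`, `y ↦ Y`
(written with values in `Π`, as `a ↦ e_0 (lift a) e_0`). -/
noncomputable def piMap (n : ℂ) (a : FreeAlgebra ℂ WGen) : PiAlg 1 (-n) :=
  Pe0 1 (-n) * wLift n a * Pe0 1 (-n)

/-! Every element of `Π` is a sum `s₁ + s₂ w + v s₃ + v s₄ w + k e_∞` with the `sᵢ` in the image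
of `π`: such sums include `1` and are stable under left multiplication by the generators, the
only cases that leave a corner being `w v = [X,Y] - e_0 = π([x,y] - 1)` and `w e_∞ = e_0 w`.
Cutting down by `e_0` on both sides leaves `s₁`, so `π` is onto `e_0 Π e_0`. For the kernel,
`[x,y] - 1 ↦ wv` and `[x,y] + n - 1 ↦ wv + n e_0`, and `wv (wv + n e_0) = w (vw) v + n wv = 0`
because `vw = -n e_∞`. -/

section PeirceCorner

variable {A : Type*} [Ring A] {a b c m : A}

theorem mul_eq_self_of_mul_mul_eq (h : a * m * b = m) (ha : IsIdempotentElem a) : a * m = m := by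
  rw [← h, ← mul_assoc, ← mul_assoc, ha.eq]

theorem mul_eq_self_of_mul_mul_eq' (h : a * m * b = m) (hb : IsIdempotentElem b) : m * b = m := by
  rw [← h, mul_assoc, hb.eq]

theorem mul_eq_zero_of_mul_mul_eq (h : a * m * b = m) (hc : c * a = 0) : c * m = 0 := by
  rw [← h, ← mul_assoc, ← mul_assoc, hc, zero_mul, zero_mul]

theorem mul_eq_zero_of_mul_mul_eq' (h : a * m * b = m) (hc : b * c = 0) : m * c = 0 := by
  rw [← h, mul_assoc, hc, mul_zero]

end PeirceCorner

section Relations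

variable {l0 li : ℂ}

theorem Pe0_idem : IsIdempotentElem (Pe0 l0 li) := by
  simpa only [IsIdempotentElem, Pe0, Peinf, map_mul] using
    RingQuot.mkAlgHom_rel ℂ (PiRel.idem_e0 (lam0 := l0) (laminf := li))

theorem Peinf_idem : IsIdempotentElem (Peinf l0 li) := by
  simpa only [IsIdempotentElem, Pe0, Peinf, map_mul] using
    RingQuot.mkAlgHom_rel ℂ (PiRel.idem_einf (lam0 := l0) (laminf := li))

theorem Pe0_mul_Peinf : Pe0 l0 li * Peinf l0 li = 0 := by
  simpa only [Pe0, Peinf, map_mul, map_zero] using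
    RingQuot.mkAlgHom_rel ℂ (PiRel.orth₁ (lam0 := l0) (laminf := li))

theorem Peinf_mul_Pe0 : Peinf l0 li * Pe0 l0 li = 0 := by
  simpa only [Pe0, Peinf, map_mul, map_zero] using
    RingQuot.mkAlgHom_rel ℂ (PiRel.orth₂ (lam0 := l0) (laminf := li))

theorem Pe0_add_Peinf : Pe0 l0 li + Peinf l0 li = 1 := by
  simpa only [Pe0, Peinf, map_add, map_one] using
    RingQuot.mkAlgHom_rel ℂ (PiRel.sum_one (lam0 := l0) (laminf := li))

theorem Pe0_mul_PX_mul_Pe0 : Pe0 l0 li * PX l0 li * Pe0 l0 li = PX l0 li := by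
  simpa only [Pe0, PX, map_mul] using
    RingQuot.mkAlgHom_rel ℂ (PiRel.X_path (lam0 := l0) (laminf := li))

theorem Pe0_mul_PY_mul_Pe0 : Pe0 l0 li * PY l0 li * Pe0 l0 li = PY l0 li := by
  simpa only [Pe0, PY, map_mul] using
    RingQuot.mkAlgHom_rel ℂ (PiRel.Y_path (lam0 := l0) (laminf := li))

theorem Peinf_mul_Pv_mul_Pe0 : Peinf l0 li * Pv l0 li * Pe0 l0 li = Pv l0 li := by
  simpa only [Pe0, Peinf, Pv, map_mul] using
    RingQuot.mkAlgHom_rel ℂ (PiRel.v_path (lam0 := l0) (laminf := li))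

theorem Pe0_mul_Pw_mul_Peinf : Pe0 l0 li * Pw l0 li * Peinf l0 li = Pw l0 li := by
  simpa only [Pe0, Peinf, Pw, map_mul] using
    RingQuot.mkAlgHom_rel ℂ (PiRel.w_path (lam0 := l0) (laminf := li))

theorem PX_mul_PY_sub_PY_mul_PX :
    PX l0 li * PY l0 li - PY l0 li * PX l0 li = l0 • Pe0 l0 li + Pw l0 li * Pv l0 li := by
  rw [← sub_eq_iff_eq_add]
  simpa only [Pe0, PX, PY, Pv, Pw, map_mul, map_sub, map_smul] using
    RingQuot.mkAlgHom_rel ℂ (PiRel.main (lam0 := l0) (laminf := li))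

theorem Pv_mul_Pw : Pv l0 li * Pw l0 li = li • Peinf l0 li := by
  simpa only [Peinf, Pv, Pw, map_mul, map_smul] using
    RingQuot.mkAlgHom_rel ℂ (PiRel.vw (lam0 := l0) (laminf := li))

theorem Pe0_mul_PX : Pe0 l0 li * PX l0 li = PX l0 li :=
  mul_eq_self_of_mul_mul_eq Pe0_mul_PX_mul_Pe0 Pe0_idem
theorem PX_mul_Pe0 : PX l0 li * Pe0 l0 li = PX l0 li :=
  mul_eq_self_of_mul_mul_eq' Pe0_mul_PX_mul_Pe0 Pe0_idem
theorem PX_mul_Peinf : PX l0 li * Peinf l0 li = 0 :=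
  mul_eq_zero_of_mul_mul_eq' Pe0_mul_PX_mul_Pe0 Pe0_mul_Peinf
theorem Pe0_mul_PY : Pe0 l0 li * PY l0 li = PY l0 li :=
  mul_eq_self_of_mul_mul_eq Pe0_mul_PY_mul_Pe0 Pe0_idem
theorem PY_mul_Pe0 : PY l0 li * Pe0 l0 li = PY l0 li :=
  mul_eq_self_of_mul_mul_eq' Pe0_mul_PY_mul_Pe0 Pe0_idem
theorem PY_mul_Peinf : PY l0 li * Peinf l0 li = 0 :=
  mul_eq_zero_of_mul_mul_eq' Pe0_mul_PY_mul_Pe0 Pe0_mul_Peinf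
theorem Peinf_mul_Pv : Peinf l0 li * Pv l0 li = Pv l0 li :=
  mul_eq_self_of_mul_mul_eq Peinf_mul_Pv_mul_Pe0 Peinf_idem
theorem Pv_mul_Pe0 : Pv l0 li * Pe0 l0 li = Pv l0 li :=
  mul_eq_self_of_mul_mul_eq' Peinf_mul_Pv_mul_Pe0 Pe0_idem
theorem Pe0_mul_Pv : Pe0 l0 li * Pv l0 li = 0 :=
  mul_eq_zero_of_mul_mul_eq Peinf_mul_Pv_mul_Pe0 Pe0_mul_Peinf
theorem Pv_mul_Peinf : Pv l0 li * Peinf l0 li = 0 :=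
  mul_eq_zero_of_mul_mul_eq' Peinf_mul_Pv_mul_Pe0 Pe0_mul_Peinf
theorem Pe0_mul_Pw : Pe0 l0 li * Pw l0 li = Pw l0 li :=
  mul_eq_self_of_mul_mul_eq Pe0_mul_Pw_mul_Peinf Pe0_idem
theorem Pw_mul_Peinf : Pw l0 li * Peinf l0 li = Pw l0 li :=
  mul_eq_self_of_mul_mul_eq' Pe0_mul_Pw_mul_Peinf Peinf_idem
theorem Pw_mul_Pe0 : Pw l0 li * Pe0 l0 li = 0 :=
  mul_eq_zero_of_mul_mul_eq' Pe0_mul_Pw_mul_Peinf Peinf_mul_Pe0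

theorem PX_mul_Pv : PX l0 li * Pv l0 li = 0 :=
  mul_eq_zero_of_mul_mul_eq Peinf_mul_Pv_mul_Pe0 PX_mul_Peinf
theorem PY_mul_Pv : PY l0 li * Pv l0 li = 0 :=
  mul_eq_zero_of_mul_mul_eq Peinf_mul_Pv_mul_Pe0 PY_mul_Peinf
theorem Pv_mul_Pv : Pv l0 li * Pv l0 li = 0 :=
  mul_eq_zero_of_mul_mul_eq Peinf_mul_Pv_mul_Pe0 Pv_mul_Peinf

end Relations

section CornerMap

variable (n : ℂ)

theorem wLift_wx : wLift n wx = PX 1 (-n) := FreeAlgebra.lift_ι_apply _ _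
theorem wLift_wy : wLift n wy = PY 1 (-n) := FreeAlgebra.lift_ι_apply _ _

theorem commute_Pe0_wLift (a : FreeAlgebra ℂ WGen) : Commute (Pe0 1 (-n)) (wLift n a) := by
  induction a using FreeAlgebra.induction with
  | grade0 r => rw [AlgHom.commutes]; exact Algebra.commute_algebraMap_right r _
  | grade1 g =>
    cases g
    · change Commute _ (wLift n wx)
      rw [wLift_wx]
      exact Pe0_mul_PX.trans PX_mul_Pe0.symm
    · change Commute _ (wLift n wy)
      rw [wLift_wy]
      exact Pe0_mul_PY.trans PY_mul_Pe0.symm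
  | mul a b ha hb => rw [map_mul]; exact ha.mul_right hb
  | add a b ha hb => rw [map_add]; exact ha.add_right hb

theorem piMap_eq_Pe0_mul (a : FreeAlgebra ℂ WGen) : piMap n a = Pe0 1 (-n) * wLift n a := by
  rw [piMap, mul_assoc, ← (commute_Pe0_wLift n a).eq, ← mul_assoc, Pe0_idem.eq]

theorem piMap_mul (a b : FreeAlgebra ℂ WGen) : piMap n (a * b) = piMap n a * piMap n b := by
  symm
  calc piMap n a * piMap n b = wLift n a * Pe0 1 (-n) * (Pe0 1 (-n) * wLift n b) := by
        rw [piMap_eq_Pe0_mul, piMap_eq_Pe0_mul, (commute_Pe0_wLift n a).eq]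
    _ = Pe0 1 (-n) * (wLift n a * wLift n b) := by
        rw [mul_assoc, ← mul_assoc (Pe0 1 (-n)), Pe0_idem.eq, ← mul_assoc,
          ← (commute_Pe0_wLift n a).eq, mul_assoc]
    _ = piMap n (a * b) := by rw [piMap_eq_Pe0_mul, map_mul]

theorem piMap_add (a b : FreeAlgebra ℂ WGen) : piMap n (a + b) = piMap n a + piMap n b := by
  rw [piMap, piMap, piMap, map_add, mul_add, add_mul]

theorem piMap_smul (r : ℂ) (a : FreeAlgebra ℂ WGen) : piMap n (r • a) = r • piMap n a := by
  rw [piMap, piMap, map_smul, mul_smul_comm, smul_mul_assoc]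

theorem piMap_zero : piMap n 0 = 0 := by
  rw [piMap, map_zero, mul_zero, zero_mul]

theorem piMap_one : piMap n 1 = Pe0 1 (-n) := by
  rw [piMap, map_one, mul_one, Pe0_idem.eq]

theorem Pe0_mul_piMap (a : FreeAlgebra ℂ WGen) : Pe0 1 (-n) * piMap n a = piMap n a := by
  rw [piMap_eq_Pe0_mul, ← mul_assoc, Pe0_idem.eq]

theorem piMap_mul_Pe0 (a : FreeAlgebra ℂ WGen) : piMap n a * Pe0 1 (-n) = piMap n a := by
  rw [piMap, mul_assoc, Pe0_idem.eq]

theorem Peinf_mul_piMap (a : FreeAlgebra ℂ WGen) : Peinf 1 (-n) * piMap n a = 0 := by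
  rw [piMap, ← mul_assoc, ← mul_assoc, Peinf_mul_Pe0, zero_mul, zero_mul]

theorem Pw_mul_piMap (a : FreeAlgebra ℂ WGen) : Pw 1 (-n) * piMap n a = 0 := by
  rw [piMap, ← mul_assoc, ← mul_assoc, Pw_mul_Pe0, zero_mul, zero_mul]

theorem PX_mul_piMap (a : FreeAlgebra ℂ WGen) : PX 1 (-n) * piMap n a = piMap n (wx * a) := by
  rw [piMap_eq_Pe0_mul, piMap_eq_Pe0_mul, map_mul, wLift_wx, ← mul_assoc, ← mul_assoc,
    PX_mul_Pe0, Pe0_mul_PX]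

theorem PY_mul_piMap (a : FreeAlgebra ℂ WGen) : PY 1 (-n) * piMap n a = piMap n (wy * a) := by
  rw [piMap_eq_Pe0_mul, piMap_eq_Pe0_mul, map_mul, wLift_wy, ← mul_assoc, ← mul_assoc,
    PY_mul_Pe0, Pe0_mul_PY]

theorem piMap_commutator_sub_one : piMap n (wx * wy - wy * wx - 1) = Pw 1 (-n) * Pv 1 (-n) := by
  rw [piMap_eq_Pe0_mul, map_sub, map_sub, map_mul, map_mul, wLift_wx, wLift_wy, map_one,
    PX_mul_PY_sub_PY_mul_PX, one_smul, mul_sub, mul_add, Pe0_idem.eq, mul_one, ← mul_assoc,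
    Pe0_mul_Pw, add_sub_cancel_left]

theorem piMap_commutator_sub_one_mul_add :
    piMap n ((wx * wy - wy * wx - 1) * (wx * wy - wy * wx + (n - 1) • 1)) = 0 := by
  have h : wx * wy - wy * wx + (n - 1) • (1 : FreeAlgebra ℂ WGen) =
      (wx * wy - wy * wx - 1) + n • 1 := by module
  rw [h, piMap_mul, piMap_add, piMap_smul, piMap_one, piMap_commutator_sub_one]
  calc Pw 1 (-n) * Pv 1 (-n) * (Pw 1 (-n) * Pv 1 (-n) + n • Pe0 1 (-n))
      = Pw 1 (-n) * (Pv 1 (-n) * Pw 1 (-n)) * Pv 1 (-n) +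
          n • (Pw 1 (-n) * (Pv 1 (-n) * Pe0 1 (-n))) := by
        rw [mul_add, mul_smul_comm]; simp only [mul_assoc]
    _ = 0 := by
        rw [Pv_mul_Pw, Pv_mul_Pe0, mul_smul_comm, smul_mul_assoc, Pw_mul_Peinf]
        module

end CornerMap

def peirceForms (n : ℂ) : Submodule ℂ (PiAlg 1 (-n)) where
  carrier := {z | ∃ (a b c d : FreeAlgebra ℂ WGen) (k : ℂ), z = piMap n a + piMap n b * Pw 1 (-n) +
    Pv 1 (-n) * piMap n c + Pv 1 (-n) * piMap n d * Pw 1 (-n) + k • Peinf 1 (-n)}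
  add_mem' := by
    rintro _ _ ⟨a, b, c, d, k, rfl⟩ ⟨a', b', c', d', k', rfl⟩
    refine ⟨a + a', b + b', c + c', d + d', k + k', ?_⟩
    simp only [piMap_add, add_mul, mul_add, add_smul]
    abel
  zero_mem' := ⟨0, 0, 0, 0, 0, by simp only [piMap_zero, zero_mul, mul_zero, zero_smul, add_zero]⟩
  smul_mem' := by
    rintro r _ ⟨a, b, c, d, k, rfl⟩
    refine ⟨r • a, r • b, r • c, r • d, r * k, ?_⟩
    simp only [piMap_smul, smul_mul_assoc, mul_smul_comm, smul_add, smul_smul]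

section Surjectivity

variable {n : ℂ}

theorem mkAlgHom_pg_mul_mem_peirceForms (g : PiGen) {z : PiAlg 1 (-n)}
    (hz : z ∈ peirceForms n) : RingQuot.mkAlgHom ℂ (PiRel 1 (-n)) (pg g) * z ∈ peirceForms n := by
  obtain ⟨a, b, c, d, k, rfl⟩ := hz
  cases g
  case X =>
    refine ⟨wx * a, wx * b, 0, 0, 0, ?_⟩
    change PX 1 (-n) * _ = _
    simp only [mul_add, mul_smul_comm, ← mul_assoc, PX_mul_piMap, PX_mul_Pv, PX_mul_Peinf,
      piMap_zero, zero_mul, mul_zero, smul_zero, zero_smul, add_zero]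
  case Y =>
    refine ⟨wy * a, wy * b, 0, 0, 0, ?_⟩
    change PY 1 (-n) * _ = _
    simp only [mul_add, mul_smul_comm, ← mul_assoc, PY_mul_piMap, PY_mul_Pv, PY_mul_Peinf,
      piMap_zero, zero_mul, mul_zero, smul_zero, zero_smul, add_zero]
  case v =>
    refine ⟨0, 0, a, b, 0, ?_⟩
    change Pv 1 (-n) * _ = _
    simp only [mul_add, mul_smul_comm, ← mul_assoc, Pv_mul_Pv, Pv_mul_Peinf,
      piMap_zero, zero_mul, smul_zero, zero_smul, add_zero, zero_add]
  case w =>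
    refine ⟨(wx * wy - wy * wx - 1) * c, (wx * wy - wy * wx - 1) * d + k • 1, 0, 0, 0, ?_⟩
    change Pw 1 (-n) * _ = _
    simp only [mul_add, mul_smul_comm, ← mul_assoc, Pw_mul_piMap, Pw_mul_Peinf,
      ← piMap_commutator_sub_one, ← piMap_mul, piMap_add, piMap_smul, piMap_one, add_mul,
      smul_mul_assoc, Pe0_mul_Pw, piMap_zero, zero_mul, mul_zero, zero_smul, add_zero, zero_add,
      add_assoc]
  case e0 =>
    refine ⟨a, b, 0, 0, 0, ?_⟩
    change Pe0 1 (-n) * _ = _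
    simp only [mul_add, mul_smul_comm, ← mul_assoc, Pe0_mul_piMap, Pe0_mul_Pv, Pe0_mul_Peinf,
      piMap_zero, zero_mul, mul_zero, smul_zero, zero_smul, add_zero]
  case einf =>
    refine ⟨0, 0, c, d, k, ?_⟩
    change Peinf 1 (-n) * _ = _
    simp only [mul_add, mul_smul_comm, ← mul_assoc, Peinf_mul_piMap, Peinf_mul_Pv,
      Peinf_idem.eq, piMap_zero, zero_mul, zero_add]

theorem mkAlgHom_mul_mem_peirceForms (f : FreeAlgebra ℂ PiGen) {z : PiAlg 1 (-n)}
    (hz : z ∈ peirceForms n) : RingQuot.mkAlgHom ℂ (PiRel 1 (-n)) f * z ∈ peirceForms n := by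
  induction f using FreeAlgebra.induction generalizing z with
  | grade0 r =>
    rw [AlgHom.commutes, Algebra.algebraMap_eq_smul_one, smul_one_mul]
    exact (peirceForms n).smul_mem r hz
  | grade1 g => exact mkAlgHom_pg_mul_mem_peirceForms g hz
  | mul f g hf hg => rw [map_mul, mul_assoc]; exact hf (hg hz)
  | add f g hf hg => rw [map_add, add_mul]; exact (peirceForms n).add_mem (hf hz) (hg hz)

theorem mem_peirceForms (z : PiAlg 1 (-n)) : z ∈ peirceForms n := by
  obtain ⟨f, rfl⟩ := RingQuot.mkAlgHom_surjective ℂ (PiRel 1 (-n)) z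
  have hone : (1 : PiAlg 1 (-n)) ∈ peirceForms n :=
    ⟨1, 0, 0, 0, 1, by simp only [piMap_one, piMap_zero, zero_mul, mul_zero, one_smul, add_zero,
      Pe0_add_Peinf]⟩
  simpa only [mul_one] using mkAlgHom_mul_mem_peirceForms f hone

theorem exists_piMap_eq_Pe0_mul_mul_Pe0 {z : PiAlg 1 (-n)} (hz : z ∈ peirceForms n) :
    ∃ a, piMap n a = Pe0 1 (-n) * z * Pe0 1 (-n) := by
  obtain ⟨a, b, c, d, k, rfl⟩ := hz
  refine ⟨a, ?_⟩
  simp only [mul_add, add_mul, mul_smul_comm, ← mul_assoc, Pe0_mul_piMap, piMap_mul_Pe0,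
    Pe0_mul_Pv, Pe0_mul_Peinf, zero_mul, smul_zero, add_zero]
  rw [mul_assoc, Pw_mul_Pe0, mul_zero, add_zero]

end Surjectivity

theorem stmt10_general (n : ℂ) :
    (∀ z : PiAlg 1 (-n), Pe0 1 (-n) * z * Pe0 1 (-n) = z → ∃ a, piMap n a = z) ∧
    piMap n ((wx * wy - wy * wx - 1) * (wx * wy - wy * wx + (n - 1) • 1)) = 0 := by
  refine ⟨fun z hz => ?_, piMap_commutator_sub_one_mul_add n⟩
  obtain ⟨a, ha⟩ := exists_piMap_eq_Pe0_mul_mul_Pe0 (mem_peirceForms z)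
  exact ⟨a, ha.trans hz⟩

/-- `π` is surjective onto the corner algebra `e_0 Π e_0`, and its kernel contains
`([x,y] - 1)([x,y] + n - 1)`. -/
theorem stmt10 (n : ℂ) (hn : n ≠ 0) :
    (∀ z : PiAlg 1 (-n), Pe0 1 (-n) * z * Pe0 1 (-n) = z → ∃ a, piMap n a = z) ∧
    piMap n ((wx * wy - wy * wx - 1) * (wx * wy - wy * wx + (n - 1) • 1)) = 0 :=
  stmt10_general n
end
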